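/- arXiv:1402.2496 — 6 statements merged into one kernel-verified Lean document; each statement's English description precedes it below -/
import Mathlib

section
/- Let G be a finite simple connected graph and let T be a spanning tree of G of maximum degree k. Suppose the vertices of T can be partitioned into 'good' and 'bad' vertices such that: (1) every vertex of degree k in T is bad; (2) every bad vertex has degree at least k−1 in T; and (3) no edge of G joins two good vertices lying in two different connected components of the forest obtained from T by deleting all bad vertices. Then k ≤ opt(G) + 1, where opt(G) is the minimum possible maximum degree of a spanning tree of G. -/
open SimpleGraph

/-- `T` is a spanning tree of `G`. -/
def IsSpanningTree {V : Type*} (G T : SimpleGraph V) : Prop :=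
  T ≤ G ∧ T.IsTree

/-- The maximum vertex degree of a graph on a finite vertex set. -/
noncomputable def maxDeg {V : Type*} [Fintype V] (T : SimpleGraph V) : ℕ :=
  Finset.univ.sup fun v => (T.neighborSet v).ncard

/-- The minimum, over all spanning trees `T'` of `G`, of the maximum degree of `T'`. -/
noncomputable def optDeg {V : Type*} [Fintype V] (G : SimpleGraph V) : ℕ :=
  sInf {k | ∃ T : SimpleGraph V, IsSpanningTree G T ∧ maxDeg T = k}

/-- The forest obtained from `T` by deleting the bad vertices (and incident edges):
the subgraph of `T` induced on good vertices. -/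
def goodForest {V : Type*} (T : SimpleGraph V) (bad : V → Prop) : SimpleGraph V :=
  SimpleGraph.fromRel fun u v => T.Adj u v ∧ ¬ bad u ∧ ¬ bad v

/-!
Let `B` be the set of bad vertices and `d = opt(G)`. Deleting from `T` the `m` edges that meet `B`
leaves the forest of fragments together with the bad vertices as singletons, which has `m + 1`
components. An optimal tree `T'` must join these components, and by condition (3) only edges
meeting `B` can do so; there are at most `|B| d` of them, so `m ≤ |B| d`. On the other hand the
edges of `T` inside `B` form a forest on `|B|` vertices, so `m ≥ |B| (k - 1) - (|B| - 1)`.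
Together, `|B| (k - 1) < |B| (d + 1)`.
-/

open Finset

namespace SimpleGraph

variable {V : Type*}

theorem Connected.of_forall_adj_reachable {G H : SimpleGraph V} (hG : G.Connected)
    (h : ∀ u v, G.Adj u v → H.Reachable u v) : H.Connected := by
  rw [connected_iff] at hG ⊢
  refine ⟨fun u v => ?_, hG.2⟩
  obtain ⟨w⟩ := hG.1 u v
  induction w with
  | nil => rfl
  | cons hadj _ ih => exact (h _ _ hadj).trans ih

section Finite

variable [Fintype V] {G : SimpleGraph V} [DecidableRel G.Adj]

theorem ncard_neighborSet_eq_degree (v : V) : (G.neighborSet v).ncard = G.degree v := by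
  rw [← Nat.card_coe_set_eq, Nat.card_eq_fintype_card, card_neighborSet_eq_degree]

theorem IsAcyclic.card_edgeFinset_lt [Nonempty V] (hG : G.IsAcyclic) :
    #G.edgeFinset < Fintype.card V := by
  obtain ⟨F, hGF, -, hF⟩ := connected_top.exists_isTree_le_of_le_of_isAcyclic le_top hG
  classical
  rw [← hF.card_edgeFinset]
  exact Nat.lt_succ_of_le (card_le_card (edgeFinset_mono hGF))

theorem Connected.card_le_card_edgeFinset_add_card_filter_add_one (hG : G.Connected)
    (H : SimpleGraph V) [DecidableRel H.Adj] (p : Sym2 V → Prop) [DecidablePred p]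
    (h : ∀ u v, G.Adj u v → ¬ p s(u, v) → H.Reachable u v) :
    Fintype.card V ≤ #H.edgeFinset + #{e ∈ G.edgeFinset | p e} + 1 := by
  set K := H ⊔ fromEdgeSet {e ∈ G.edgeSet | p e}
  have hK : K.Connected := hG.of_forall_adj_reachable fun u v huv => by
    by_cases hp : p s(u, v)
    · exact Adj.reachable (Or.inr ⟨⟨huv, hp⟩, huv.ne⟩)
    · exact (h u v huv hp).mono le_sup_left
  calc Fintype.card V ≤ K.edgeSet.ncard + 1 := by
        simpa using hK.card_vert_le_card_edgeSet_add_one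
    _ ≤ H.edgeSet.ncard + {e ∈ G.edgeSet | p e}.ncard + 1 := by
        grw [edgeSet_sup, Set.ncard_union_le, edgeSet_fromEdgeSet,
          Set.ncard_le_ncard Set.sdiff_subset]
    _ = #H.edgeFinset + #{e ∈ G.edgeFinset | p e} + 1 := by
        simp only [← Set.ncard_coe_finset, coe_filter, coe_edgeFinset, mem_edgeFinset]

variable [DecidableEq V]

variable (G) in
theorem sum_degree_eq_card_filter_add_card_filter (s : Finset V) :
    ∑ v ∈ s, G.degree v =
      #{e ∈ G.edgeFinset | ∃ v ∈ e, v ∈ s} + #{e ∈ G.edgeFinset | e.toFinset ⊆ s} := by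
  simp_rw [← card_incidenceFinset_eq_degree, incidenceFinset_eq_filter]
  refine (sum_card_bipartiteAbove_eq_sum_card_bipartiteBelow (· ∈ ·)).trans ?_
  rw [card_filter, card_filter, ← sum_add_distrib]
  refine sum_congr rfl fun e he => ?_
  induction e using Sym2.ind with
  | _ x y =>
  have hxy : x ≠ y := (G.adj_iff_exists_edge.mp (mem_edgeFinset.mp he)).1
  by_cases hx : x ∈ s <;> by_cases hy : y ∈ s <;>
    simp [bipartiteBelow, hx, hy, hxy, filter_or, filter_eq', Sym2.toFinset_mk_eq,
      insert_subset_iff]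

theorem IsAcyclic.card_filter_edgeFinset_subset_lt (hG : G.IsAcyclic) {s : Finset V}
    (hs : s.Nonempty) : #{e ∈ G.edgeFinset | e.toFinset ⊆ s} < #s := by
  have : Nonempty s := hs.to_subtype
  rw [card_filter_edgeFinset_toFinset_subset, ← Fintype.card_coe s]
  convert (hG.induce s).card_edgeFinset_lt
  simp

theorem IsAcyclic.sum_degree_lt_card_filter_edgeFinset_add_card (hG : G.IsAcyclic)
    {s : Finset V} (hs : s.Nonempty) :
    ∑ v ∈ s, G.degree v < #{e ∈ G.edgeFinset | ∃ v ∈ e, v ∈ s} + #s := by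
  rw [sum_degree_eq_card_filter_add_card_filter]
  exact Nat.add_lt_add_left (hG.card_filter_edgeFinset_subset_lt hs) _

end Finite

end SimpleGraph

section FurerRaghavachari

variable {V : Type*}

theorem goodForest_adj {T : SimpleGraph V} {bad : V → Prop} {u v : V} :
    (goodForest T bad).Adj u v ↔ T.Adj u v ∧ ¬ bad u ∧ ¬ bad v := by
  simp only [goodForest, fromRel_adj]
  constructor
  · rintro ⟨-, h | h⟩
    exacts [h, ⟨h.1.symm, h.2.2, h.2.1⟩]
  · exact fun h => ⟨h.1.ne, Or.inl h⟩

variable [Fintype V]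

theorem degree_le_maxDeg (T : SimpleGraph V) [DecidableRel T.Adj] (v : V) :
    T.degree v ≤ maxDeg T := by
  rw [← ncard_neighborSet_eq_degree]
  exact le_sup (f := fun v => (T.neighborSet v).ncard) (mem_univ v)

theorem exists_degree_eq_maxDeg [Nonempty V] (T : SimpleGraph V) [DecidableRel T.Adj] :
    ∃ v, T.degree v = maxDeg T := by
  obtain ⟨v, -, hv⟩ := exists_mem_eq_sup univ univ_nonempty fun v => (T.neighborSet v).ncard
  exact ⟨v, (ncard_neighborSet_eq_degree v).symm.trans hv.symm⟩

theorem exists_isSpanningTree_maxDeg_eq_optDeg {G T : SimpleGraph V} (hT : IsSpanningTree G T) :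
    ∃ T', IsSpanningTree G T' ∧ maxDeg T' = optDeg G :=
  Nat.sInf_mem (s := {k | ∃ T', IsSpanningTree G T' ∧ maxDeg T' = k}) ⟨_, T, hT, rfl⟩

theorem SimpleGraph.IsTree.card_filter_edgeFinset_le_of_reachable_goodForest [DecidableEq V]
    {T T' : SimpleGraph V} [DecidableRel T.Adj] [DecidableRel T'.Adj] {bad : V → Prop}
    [DecidablePred bad] (hT : T.IsTree) (hT' : T'.Connected)
    (h : ∀ u v, T'.Adj u v → ¬ bad u → ¬ bad v → (goodForest T bad).Reachable u v) :
    #{e ∈ T.edgeFinset | ∃ v ∈ e, bad v} ≤ #{e ∈ T'.edgeFinset | ∃ v ∈ e, bad v} := by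
  classical
  have hF : (goodForest T bad).edgeFinset = {e ∈ T.edgeFinset | ¬ ∃ v ∈ e, bad v} := by
    ext e
    induction e using Sym2.ind
    simp [goodForest_adj]
  have hcard := hT'.card_le_card_edgeFinset_add_card_filter_add_one (goodForest T bad)
    (fun e => ∃ v ∈ e, bad v) fun u v huv hp => by
      simp only [Sym2.mem_iff, exists_eq_or_imp, exists_eq_left, not_or] at hp
      exact h u v huv hp.1 hp.2
  rw [hF] at hcard
  have hsplit := card_filter_add_card_filter_not (s := T.edgeFinset) (fun e => ∃ v ∈ e, bad v)
  have htree := hT.card_edgeFinset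
  omega

end FurerRaghavachari

theorem FRtree_degree_le_opt_add_one_general {V : Type*} [Fintype V]
    (G T : SimpleGraph V) (k : ℕ)
    (hT : IsSpanningTree G T) (hk : maxDeg T = k)
    (bad : V → Prop)
    (h1 : ∀ v, (T.neighborSet v).ncard = k → bad v)
    (h2 : ∀ v, bad v → k - 1 ≤ (T.neighborSet v).ncard)
    (h3 : ∀ u v, G.Adj u v → ¬ bad u → ¬ bad v → (goodForest T bad).Reachable u v) :
    k ≤ optDeg G + 1 := by
  classical
  have : Nonempty V := hT.2.connected.nonempty
  obtain ⟨T', hT', hT'opt⟩ := exists_isSpanningTree_maxDeg_eq_optDeg hT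
  obtain ⟨v₀, hv₀⟩ := exists_degree_eq_maxDeg T
  set B : Finset V := {v | bad v}
  have hB : B.Nonempty := ⟨v₀, by
    simpa [B] using h1 v₀ ((ncard_neighborSet_eq_degree v₀).trans (hv₀.trans hk))⟩
  have key : #B * (k - 1) < #B * (optDeg G + 1) := calc
    #B * (k - 1) ≤ ∑ v ∈ B, T.degree v := card_nsmul_le_sum _ _ _ fun v hv => by
        simpa [ncard_neighborSet_eq_degree] using h2 v (by simpa [B] using hv)
    _ < #{e ∈ T.edgeFinset | ∃ v ∈ e, bad v} + #B := by
        simpa [B] using hT.2.isAcyclic.sum_degree_lt_card_filter_edgeFinset_add_card hB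
    _ ≤ #{e ∈ T'.edgeFinset | ∃ v ∈ e, bad v} + #B := by
        grw [hT.2.card_filter_edgeFinset_le_of_reachable_goodForest hT'.2.connected
          fun u v huv => h3 u v (hT'.1 huv)]
    _ ≤ ∑ v ∈ B, T'.degree v + #B := by
        simp [sum_degree_eq_card_filter_add_card_filter T' B, B]
    _ ≤ #B * optDeg G + #B := by
        grw [sum_le_card_nsmul B _ _ fun v _ => hT'opt ▸ degree_le_maxDeg T' v, smul_eq_mul]
    _ = #B * (optDeg G + 1) := by ring
  have := lt_of_mul_lt_mul_left key
  omega

/-- Theorem 2.2 of Fürer–Raghavachari: if `T` is a spanning tree of `G` of maximum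
degree `k` whose vertices can be marked good/bad so that (1) every degree-`k` vertex
is bad, (2) every bad vertex has degree ≥ `k-1` in `T`, and (3) no edge of `G` joins
two good vertices lying in different components of the forest obtained by deleting the
bad vertices, then `k ≤ opt(G) + 1`. -/
theorem FRtree_degree_le_opt_add_one {V : Type*} [Fintype V]
    (G T : SimpleGraph V) (k : ℕ)
    (hG : G.Connected) (hT : IsSpanningTree G T) (hk : maxDeg T = k)
    (bad : V → Prop)
    (h1 : ∀ v, (T.neighborSet v).ncard = k → bad v)
    (h2 : ∀ v, bad v → k - 1 ≤ (T.neighborSet v).ncard)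
    (h3 : ∀ u v, G.Adj u v → ¬ bad u → ¬ bad v → (goodForest T bad).Reachable u v) :
    k ≤ optDeg G + 1 :=
  FRtree_degree_le_opt_add_one_general G T k hT hk bad h1 h2 h3
end

section
/- Let G be a finite simple connected graph with vertex set V and let p : V → V ∪ {⊥} assign to each vertex a parent (with p(r) = ⊥ for exactly one vertex r, and p(v) a neighbor of v in G for all v ≠ r). Suppose there exist functions id : V → ℕ and d : V → ℕ such that: every vertex has the same value of id (equal to id(r)); d(r) = 0; and for every v ≠ r, d(v) = d(p(v)) + 1. Then the digraph with edge set {(v, p(v)) : v ≠ r} is a spanning tree of G rooted at r (i.e., the underlying graph {{v, p(v)} : v ≠ r} is a spanning tree of G). -/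
open SimpleGraph

/-- The 1-factor induced by a parent assignment `p : V → Option V`:
the simple graph with edge set `{{v, p v} : p v ≠ none}`. -/
def parentGraph {V : Type*} (p : V → Option V) : SimpleGraph V :=
  SimpleGraph.fromEdgeSet {e | ∃ v u, p v = some u ∧ e = s(v, u)}

/-!
Since `d` drops by one from `v` to `p v`, the only neighbour `w` of `v` in the parent graph with
`d w ≤ d v` is `p v`. Following parents therefore reaches the root, so the parent graph is
connected; and on a cycle, the two cycle neighbours of a vertex maximising `d` would both be its
parent, although they are distinct.
-/

namespace SimpleGraph

theorem isAcyclic_of_adj_le_unique {V β : Type*} [LinearOrder β] (G : SimpleGraph V) (f : V → β)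
    (h : ∀ ⦃v x y⦄, G.Adj v x → G.Adj v y → f x ≤ f v → f y ≤ f v → x = y) :
    G.IsAcyclic := by
  classical
  intro v c hc
  obtain ⟨m, hm, hmax⟩ := c.support.toFinset.exists_max_image f ⟨v, by simp⟩
  set c' := c.rotate m (List.mem_toFinset.mp hm)
  have hc' : c'.IsCycle := hc.rotate _
  have hle : ∀ w ∈ c'.support, f w ≤ f m := fun w hw => hmax w (by simpa [c'] using hw)
  exact hc'.snd_ne_penultimate <|
    h (c'.adj_snd hc'.not_nil) (c'.adj_penultimate hc'.not_nil).symm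
      (hle _ (c'.getVert_mem_support 1)) (hle _ (c'.getVert_mem_support _))

end SimpleGraph

section ParentGraph

variable {V : Type*} {p : V → Option V} {d : V → ℕ}

theorem parentGraph_adj {x y : V} :
    (parentGraph p).Adj x y ↔ (p x = some y ∨ p y = some x) ∧ x ≠ y := by
  simp only [parentGraph, fromEdgeSet_adj, Set.mem_ofPred_eq, Sym2.eq_iff]
  constructor
  · rintro ⟨⟨v, u, hpv, ⟨rfl, rfl⟩ | ⟨rfl, rfl⟩⟩, hne⟩
    exacts [⟨.inl hpv, hne⟩, ⟨.inr hpv, hne⟩]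
  · rintro ⟨h | h, hne⟩
    exacts [⟨⟨x, y, h, .inl ⟨rfl, rfl⟩⟩, hne⟩, ⟨⟨y, x, h, .inr ⟨rfl, rfl⟩⟩, hne⟩]

theorem parentGraph_le {G : SimpleGraph V} (hG : ∀ v u, p v = some u → G.Adj v u) :
    parentGraph p ≤ G := by
  intro x y hxy
  rcases parentGraph_adj.mp hxy with ⟨h | h, -⟩
  exacts [hG x y h, (hG y x h).symm]

variable (hd : ∀ v u, p v = some u → d v = d u + 1)
include hd

theorem parentGraph_adj_parent {v u : V} (h : p v = some u) : (parentGraph p).Adj v u :=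
  parentGraph_adj.mpr ⟨.inl h, fun hvu => by have := hd v u h; subst hvu; omega⟩

theorem eq_some_of_parentGraph_adj_of_le {x y : V} (hxy : (parentGraph p).Adj x y)
    (hle : d y ≤ d x) : p x = some y := by
  rcases parentGraph_adj.mp hxy with ⟨h | h, -⟩
  · exact h
  · have := hd y x h; omega

theorem parentGraph_isAcyclic : (parentGraph p).IsAcyclic :=
  (parentGraph p).isAcyclic_of_adj_le_unique d fun _ _ _ hx hy hxle hyle =>
    Option.some_injective _ <|
      (eq_some_of_parentGraph_adj_of_le hd hx hxle).symm.trans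
        (eq_some_of_parentGraph_adj_of_le hd hy hyle)

theorem parentGraph_reachable_root {r : V} (hpar : ∀ v, v ≠ r → ∃ u, p v = some u) (v : V) :
    (parentGraph p).Reachable v r := by
  induction hn : d v using Nat.strong_induction_on generalizing v with
  | _ n ih =>
    by_cases hvr : v = r
    · exact hvr ▸ .refl v
    obtain ⟨u, hu⟩ := hpar v hvr
    exact (parentGraph_adj_parent hd hu).reachable.trans
      (ih (d u) (by have := hd v u hu; omega) u rfl)

theorem parentGraph_connected {r : V} (hpar : ∀ v, v ≠ r → ∃ u, p v = some u) :
    (parentGraph p).Connected :=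
  haveI : Nonempty V := ⟨r⟩
  ⟨fun a b => (parentGraph_reachable_root hd hpar a).trans
    (parentGraph_reachable_root hd hpar b).symm⟩

end ParentGraph

theorem distance_labels_give_spanning_tree_general {V : Type*}
    (G : SimpleGraph V)
    (p : V → Option V) (r : V)
    (hroot : p r = none)
    (hnbr : ∀ v, v ≠ r → ∃ u, p v = some u ∧ G.Adj v u)
    (d : V → ℕ)
    (hd : ∀ v, v ≠ r → ∀ u, p v = some u → d v = d u + 1) :
    IsSpanningTree G (parentGraph p) := by
  have ne_root : ∀ {v u}, p v = some u → v ≠ r := by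
    rintro v u h rfl
    simp [hroot] at h
  have hd' : ∀ v u, p v = some u → d v = d u + 1 := fun v u h => hd v (ne_root h) u h
  have hG : ∀ v u, p v = some u → G.Adj v u := by
    intro v u h
    obtain ⟨u', hu', hadj⟩ := hnbr v (ne_root h)
    rw [h, Option.some_inj] at hu'
    exact hu' ▸ hadj
  exact ⟨parentGraph_le hG,
    parentGraph_connected hd' fun v hv => (hnbr v hv).imp fun _ => And.left,
    parentGraph_isAcyclic hd'⟩

/-- Soundness of the distance-based proof-labeling scheme for spanning trees:
if `p` is a parent assignment on a finite connected graph `G` with a unique root `r`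
(`p r = ⊥`, and `p v` a `G`-neighbor of `v` for `v ≠ r`), and there are labels
`id, d : V → ℕ` such that all vertices carry the same `id` value, `d r = 0`, and
`d v = d (p v) + 1` for every `v ≠ r`, then the parent edges form a spanning tree
of `G` (rooted at `r`). -/
theorem distance_labels_give_spanning_tree {V : Type*} [Fintype V]
    (G : SimpleGraph V) (hG : G.Connected)
    (p : V → Option V) (r : V)
    (hroot : p r = none)
    (hnbr : ∀ v, v ≠ r → ∃ u, p v = some u ∧ G.Adj v u)
    (idl d : V → ℕ)
    (hid : ∀ v, idl v = idl r)
    (hd0 : d r = 0)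
    (hd : ∀ v, v ≠ r → ∀ u, p v = some u → d v = d u + 1) :
    IsSpanningTree G (parentGraph p) :=
  distance_labels_give_spanning_tree_general G p r hroot hnbr d hd
end

section
/- Let V be a finite set of n ≥ 1 vertices and p : V → V ∪ {⊥} a parent assignment with p(r) = ⊥ for exactly one vertex r. Suppose there exists s : V → ℕ such that for every vertex v, s(v) = 1 + Σ_{u : p(u) = v} s(u). Then the functional graph of p restricted to V \ {r} contains no directed cycle; in particular {(v, p(v)) : v ≠ r} is a tree on vertex set V rooted (via iterated parent) at r, hence it is a spanning tree. -/
open SimpleGraph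

/-- Soundness of the size-based proof-labeling scheme: if `p` is a parent assignment
on a finite nonempty vertex set `V` with a unique root `r` (`p r = ⊥` and `p v ≠ ⊥`
for `v ≠ r`), and there is `s : V → ℕ` with `s v = 1 + Σ_{u : p u = v} s u` at every
vertex, then the parent pointers contain no directed cycle, and the parent edges form
a tree spanning `V`. -/
theorem size_labels_give_spanning_tree {V : Type*} [Fintype V] [DecidableEq V]
    [Nonempty V]
    (p : V → Option V) (r : V)
    (hroot : p r = none)
    (hne : ∀ v, v ≠ r → p v ≠ none)
    (s : V → ℕ)
    (hs : ∀ v, s v = 1 + ∑ u ∈ Finset.univ.filter (fun u => p u = some v), s u) :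
    (∀ (v : V) (k : ℕ), 0 < k → (fun o : Option V => o.bind p)^[k] (some v) ≠ some v) ∧
    (parentGraph p).IsTree := by
  classical
  -- The key monotonicity fact: a child's label is strictly smaller than its parent's.
  have step : ∀ v w : V, p v = some w → s v + 1 ≤ s w := by
    intro v w h
    have hv : v ∈ Finset.univ.filter (fun u => p u = some w) := by simp [h]
    have hle : s v ≤ ∑ u ∈ Finset.univ.filter (fun u => p u = some w), s u :=
      Finset.single_le_sum (fun i _ => Nat.zero_le _) hv
    have := hs w
    omega
  have hnone : ∀ n : ℕ, (fun o : Option V => o.bind p)^[n] none = none := by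
    intro n
    induction n with
    | zero => rfl
    | succ m ih => rw [Function.iterate_succ_apply]; simpa using ih
  have key : ∀ (k : ℕ) (v w : V),
      (fun o : Option V => o.bind p)^[k] (some v) = some w → s v + k ≤ s w := by
    intro k
    induction k with
    | zero =>
      intro v w h
      simp only [Function.iterate_zero_apply, Option.some.injEq] at h
      subst h; omega
    | succ n ih =>
      intro v w h
      rw [Function.iterate_succ_apply] at h
      cases hp : p v with
      | none =>
        simp only [hp, Option.bind_some] at h
        rw [hnone n] at h
        exact absurd h (by simp)
      | some u =>
        simp only [Option.bind_some, hp] at h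
        have h1 := ih u w h
        have h2 := step v u hp
        omega
  -- adjacency of a child and its parent
  have adj : ∀ v w : V, p v = some w → (parentGraph p).Adj v w := by
    intro v w h
    rw [parentGraph, fromEdgeSet_adj]
    refine ⟨⟨v, w, h, rfl⟩, ?_⟩
    intro hvw
    subst hvw
    have := step v v h
    omega
  have hbound : ∀ v : V, s v ≤ ∑ u, s u := fun v =>
    Finset.single_le_sum (fun i _ => Nat.zero_le _) (Finset.mem_univ v)
  -- every vertex reaches the root
  have reach : ∀ (n : ℕ) (v : V), (∑ u, s u) - s v ≤ n →
      (parentGraph p).Reachable v r := by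
    intro n
    induction n with
    | zero =>
      intro v hv
      by_cases hvr : v = r
      · subst hvr; rfl
      · obtain ⟨w, hw⟩ : ∃ w, p v = some w := by
          cases hpv : p v with
          | none => exact absurd hpv (hne v hvr)
          | some w => exact ⟨w, rfl⟩
        have h1 := step v w hw
        have h2 := hbound w
        omega
    | succ n ih =>
      intro v hv
      by_cases hvr : v = r
      · subst hvr; rfl
      · obtain ⟨w, hw⟩ : ∃ w, p v = some w := by
          cases hpv : p v with
          | none => exact absurd hpv (hne v hvr)
          | some w => exact ⟨w, rfl⟩
        have h1 := step v w hw
        have h2 := hbound w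
        exact (adj v w hw).reachable.trans (ih w (by omega))
  have hconn : (parentGraph p).Connected := by
    rw [connected_iff]
    exact ⟨fun a b => (reach _ a le_rfl).trans (reach _ b le_rfl).symm, ‹_›⟩
  have hacyc : (parentGraph p).IsAcyclic := by
    intro u c hc
    have hedge : ∀ e ∈ c.edges, ∃ v w, p v = some w ∧ e = s(v, w) := by
      intro e he
      have h1 := c.edges_subset_edgeSet he
      rw [parentGraph, edgeSet_fromEdgeSet] at h1
      exact h1.1
    -- the "child endpoint" of each edge of the cycle
    let t : Sym2 V → V := fun e =>
      if h : ∃ v w, p v = some w ∧ e = s(v, w) then h.choose else u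
    have ht : ∀ e ∈ c.edges, ∃ w, p (t e) = some w ∧ e = s(t e, w) := by
      intro e he
      have h := hedge e he
      simp only [t, dif_pos h]
      exact h.choose_spec
    set E : Finset (Sym2 V) := c.edges.toFinset with hE
    set S : Finset V := c.support.toFinset with hS
    have htE : ∀ e ∈ E, ∃ w, p (t e) = some w ∧ e = s(t e, w) := by
      intro e he
      exact ht e (List.mem_toFinset.mp he)
    have hinj : Set.InjOn t E := by
      intro e1 he1 e2 he2 hteq
      obtain ⟨w1, hw1, he1'⟩ := htE e1 he1
      obtain ⟨w2, hw2, he2'⟩ := htE e2 he2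
      rw [hteq] at hw1
      rw [hw1] at hw2
      injection hw2 with hww
      rw [he1', he2', hteq, hww]
    have himg : E.image t ⊆ S := by
      intro x hx
      obtain ⟨e, he, hte⟩ := Finset.mem_image.mp hx
      obtain ⟨w, hw, he'⟩ := htE e he
      have hmem : s(t e, w) ∈ c.edges := he' ▸ List.mem_toFinset.mp he
      have := c.fst_mem_support_of_mem_edges hmem
      rw [hte] at this
      exact List.mem_toFinset.mpr this
    have hcardE : E.card = c.length := by
      rw [hE, List.toFinset_card_of_nodup hc.edges_nodup, Walk.length_edges]
    have hcardS : S.card ≤ c.length := by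
      cases c with
      | nil => exact absurd rfl hc.ne_nil
      | cons h q =>
        have hu : u ∈ q.support := q.end_mem_support
        have : S = q.support.toFinset := by
          rw [hS, Walk.support_cons, List.toFinset_cons,
            Finset.insert_eq_self.mpr (List.mem_toFinset.mpr hu)]
        rw [this]
        calc q.support.toFinset.card ≤ q.support.length := q.support.toFinset_card_le
          _ = q.length + 1 := q.length_support
          _ = (Walk.cons h q).length := (Walk.length_cons h q).symm
    have himg_eq : E.image t = S := by
      apply Finset.eq_of_subset_of_card_le himg
      rw [Finset.card_image_of_injOn hinj, hcardE]
      exact hcardS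
    have hSne : S.Nonempty := ⟨u, List.mem_toFinset.mpr c.start_mem_support⟩
    obtain ⟨x, hxS, hmax⟩ := S.exists_max_image s hSne
    have hximg : x ∈ E.image t := himg_eq ▸ hxS
    obtain ⟨e, he, hte⟩ := Finset.mem_image.mp hximg
    obtain ⟨w, hw, he'⟩ := htE e he
    have hmem : s(t e, w) ∈ c.edges := he' ▸ List.mem_toFinset.mp he
    have hwS : w ∈ S := List.mem_toFinset.mpr (c.snd_mem_support_of_mem_edges hmem)
    have h1 := step (t e) w hw
    have h2 := hmax w hwS
    rw [hte] at h1
    omega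
  refine ⟨?_, ⟨hconn, hacyc⟩⟩
  intro v k hk h
  have := key k v v h
  omega
end

section
/- Let V be a finite set, p : V → V a function (parent pointers on a subset C ⊆ V forming a directed cycle under p), and suppose each vertex v ∈ C carries a label L(v) ∈ (ℕ × {⊥}) ∪ ({⊥} × ℕ) ∪ (ℕ × ℕ) (a pruned (distance, size) pair, never (⊥,⊥)). Suppose the verification table holds along the cycle: whenever L(v) = (d, ⊥), then L(p(v)) is of the form (d', ⊥) with d = d' + 1; whenever L(v) has a non-⊥ size component s, then s = 1 + Σ_{u : p(u)=v, u ∈ C} s_u where each such u has non-⊥ size s_u; and labels of the form (d, ⊥) whose parent's label is of the form (d', s') or (⊥, s') are rejected, as are labels (⊥, s) whose parent's label is (d', ⊥). Then no such consistent labeling of a directed cycle exists; i.e., the verification detects every cycle. -/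
/-- Soundness of the pruned (distance, size) proof-labeling scheme on cycles:
no directed cycle of parent pointers can carry a consistent pruned labeling, i.e., the
verification procedure detects every cycle.  Here `C` is a nonempty set of vertices
closed under the parent map `p` on which `p` is cyclic (every vertex of `C` returns to
itself after finitely many steps), and `L v = (dist?, size?)` is a pruned label, never
`(⊥, ⊥)`.  The consistency conditions are those of the verification table:
a label `(d, ⊥)` forces the parent label to be `(d', ⊥)` with `d = d' + 1`
(parent labels of the forms `(d', s')` and `(⊥, s')` are rejected);
a label with size component `s` forces all children in `C` to carry size components,
with `s = 1 + Σ` (children sizes); and a label `(⊥, s)` forces the parent's size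
component to be present. -/
theorem pruned_labeling_detects_cycles {V : Type*} [Fintype V] [DecidableEq V]
    (p : V → V) (C : Finset V) (hCne : C.Nonempty)
    (hclosed : ∀ v ∈ C, p v ∈ C)
    (hcyc : ∀ v ∈ C, ∃ k : ℕ, 0 < k ∧ p^[k] v = v)
    (L : V → Option ℕ × Option ℕ)
    (hnotbot : ∀ v ∈ C, L v ≠ (none, none))
    (hdist : ∀ v ∈ C, ∀ d : ℕ, L v = (some d, none) →
      ∃ d' : ℕ, L (p v) = (some d', none) ∧ d = d' + 1)
    (hsize : ∀ v ∈ C, ∀ s : ℕ, (L v).2 = some s →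
      (∀ u ∈ C, p u = v → (L u).2 ≠ none) ∧
      s = 1 + ∑ u ∈ C.filter (fun u => p u = v), ((L u).2).getD 0)
    (hbotdist : ∀ v ∈ C, (L v).1 = none → (L (p v)).2 ≠ none) :
    False := by
  have hiter : ∀ k : ℕ, ∀ v ∈ C, p^[k] v ∈ C := by
    intro k
    induction k with
    | zero => intro v hv; simpa using hv
    | succ n ih =>
      intro v hv
      rw [Function.iterate_succ_apply']
      exact hclosed _ (ih v hv)
  by_cases hD : ∃ v ∈ C, ∃ d : ℕ, L v = (some d, none)
  · -- distance case
    obtain ⟨v, hv, d, hLv⟩ := hD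
    have key : ∀ k : ℕ, ∃ dk : ℕ, L (p^[k] v) = (some dk, none) ∧ d = dk + k := by
      intro k
      induction k with
      | zero => exact ⟨d, by simpa using hLv, by simp⟩
      | succ n ih =>
        obtain ⟨dn, hLn, hdn⟩ := ih
        obtain ⟨d', hL', hd'⟩ := hdist _ (hiter n v hv) dn hLn
        rw [Function.iterate_succ_apply'] at *
        exact ⟨d', hL', by omega⟩
    obtain ⟨k, hk, hpk⟩ := hcyc v hv
    obtain ⟨dk, hLk, hdk⟩ := key k
    rw [hpk, hLv] at hLk
    have : d = dk := by simpa using hLk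
    omega
  · -- all vertices have a size
    push_neg at hD
    have hall : ∀ v ∈ C, ∃ s : ℕ, (L v).2 = some s := by
      intro v hv
      cases h2 : (L v).2 with
      | some s => exact ⟨s, rfl⟩
      | none =>
        cases h1 : (L v).1 with
        | none => exact absurd (Prod.ext h1 h2) (hnotbot v hv)
        | some d => exact absurd (Prod.ext h1 h2) (hD v hv d)
    -- size function
    set f : V → ℕ := fun v => ((L v).2).getD 0 with hf
    have hstep : ∀ v ∈ C, f v + 1 ≤ f (p v) := by
      intro v hv
      obtain ⟨s', hs'⟩ := hall (p v) (hclosed v hv)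
      obtain ⟨_, hsum⟩ := hsize (p v) (hclosed v hv) s' hs'
      have hsum' : s' = 1 + ∑ u ∈ C.filter (fun u => p u = p v), f u := hsum
      have hmem : v ∈ C.filter (fun u => p u = p v) := by
        simp [Finset.mem_filter, hv]
      have hle : f v ≤ ∑ u ∈ C.filter (fun u => p u = p v), f u :=
        Finset.single_le_sum (fun u _ => Nat.zero_le _) hmem
      have : f (p v) = s' := by simp [hf, hs']
      omega
    have key : ∀ k : ℕ, ∀ v ∈ C, f v + k ≤ f (p^[k] v) := by
      intro k
      induction k with
      | zero => intro v hv; simp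
      | succ n ih =>
        intro v hv
        have h1 := ih v hv
        have h2 := hstep _ (hiter n v hv)
        rw [Function.iterate_succ_apply']
        omega
    obtain ⟨v, hv⟩ := hCne
    obtain ⟨k, hk, hpk⟩ := hcyc v hv
    have := key k v hv
    rw [hpk] at this
    omega
end

section
/- Let T be a spanning tree of a finite simple connected graph G rooted at r, with correct distance and size labels d(v) (distance to r in T) and s(v) (size of subtree of v). Let the labeling L be any pruning of (d, s) (some vertices have L(v) = (d(v), ⊥), some (⊥, s(v)), some (d(v), s(v)), none (⊥,⊥)) satisfying: C1: if L(v) = (d(v), ⊥) then L(p(v)) = (d(p(v)), ⊥); C2: if L(v) = (⊥, s(v)) then the second component of L(p(v)) is s(p(v)) (i.e., L(p(v)) ∈ {(d(p(v)), s(p(v))), (⊥, s(p(v)))}). Then every vertex passes the local verification: whenever the verification procedure checks 'distance' at v it finds d(v) = d(p(v)) + 1, and whenever it checks 'size' at v, all children of v carry non-⊥ size components and s(v) = 1 + Σ_{u ∈ child(v)} s(u). -/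
/-- Completeness of the pruned (distance, size) proof-labeling scheme for rooted
spanning trees.  The tree is given by parent pointers `p` with root `r` on a finite
vertex set; `d` is the true distance-to-root labeling and `s` the true subtree-size
labeling.  `pr` is any pruning of the redundant labels `(d v, s v)` (each vertex keeps
`(d v, s v)`, `(d v, ⊥)` or `(⊥, s v)`, never `(⊥, ⊥)`) satisfying
C1: if `pr v = (d v, ⊥)` then `pr (p v) = (d (p v), ⊥)`, and
C2: if `pr v = (⊥, s v)` then the size component of `pr (p v)` is `s (p v)`.
Then every vertex passes the local verification: no rejecting label combination of the
verification table occurs, every executed distance check finds `d v = d (p v) + 1`, and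
every executed size check finds all children carrying size components summing correctly. -/
theorem pruned_labeling_complete {V : Type*} [Fintype V] [DecidableEq V]
    (p : V → V) (r : V) (hr : p r = r) (hreach : ∀ v, ∃ n : ℕ, p^[n] v = r)
    (d s : V → ℕ)
    (hd0 : d r = 0) (hd : ∀ v, v ≠ r → d v = d (p v) + 1)
    (hs : ∀ v, s v = 1 + ∑ u ∈ Finset.univ.filter (fun u => p u = v ∧ u ≠ v), s u)
    (pr : V → Option ℕ × Option ℕ)
    (hpr : ∀ v, pr v = (some (d v), some (s v)) ∨ pr v = (some (d v), none) ∨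
      pr v = (none, some (s v)))
    (hC1 : ∀ v, v ≠ r → pr v = (some (d v), none) → pr (p v) = (some (d (p v)), none))
    (hC2 : ∀ v, v ≠ r → pr v = (none, some (s v)) → (pr (p v)).2 = some (s (p v))) :
    -- no rejecting combination occurs:
    (∀ v, v ≠ r → (pr v).2 = none → (pr (p v)).2 = none) ∧
    (∀ v, v ≠ r → (pr v).1 = none → (pr (p v)).2 ≠ none) ∧
    -- every executed distance check succeeds:
    (∀ v, v ≠ r → (pr v).1.isSome → (pr (p v)).1.isSome → d v = d (p v) + 1) ∧
    -- every executed size check succeeds: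
    (∀ v, (pr v).2.isSome →
      (∀ u, p u = v → u ≠ v → (pr u).2.isSome) ∧
      s v = 1 + ∑ u ∈ Finset.univ.filter (fun u => p u = v ∧ u ≠ v),
        ((pr u).2).getD 0) := by
  have hnone : ∀ v, (pr v).2 = none → pr v = (some (d v), none) := by
    intro v h
    rcases hpr v with h1 | h1 | h1 <;> rw [h1] at h ⊢ <;> simp at h ⊢
  refine ⟨?_, ?_, ?_, ?_⟩
  · intro v hv h
    rw [hC1 v hv (hnone v h)]
  · intro v hv h
    have hv2 : pr v = (none, some (s v)) := by
      rcases hpr v with h1 | h1 | h1 <;> rw [h1] at h ⊢ <;> simp at h ⊢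
    rw [hC2 v hv hv2]; simp
  · intro v hv _ _; exact hd v hv
  · intro v hv
    have hchild : ∀ u, p u = v → u ≠ v → (pr u).2.isSome := by
      intro u hpu huv
      by_contra h
      have h2 : (pr u).2 = none := by
        cases h3 : (pr u).2
        · rfl
        · rw [h3] at h; simp at h
      have hur : u ≠ r := fun h4 => huv (h4.trans ((h4 ▸ hpu).symm.trans hr).symm ▸ rfl)
      have h5 := hC1 u hur (hnone u h2)
      rw [hpu] at h5
      rw [h5] at hv
      simp at hv
    refine ⟨hchild, ?_⟩
    rw [hs v]
    congr 1
    apply Finset.sum_congr rfl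
    intro u hu
    simp only [Finset.mem_filter] at hu
    have h6 := hchild u hu.2.1 hu.2.2
    rcases hpr u with h1 | h1 | h1 <;> rw [h1] at h6 ⊢ <;> simp at h6 ⊢
end

section
/- Let T be a spanning tree of graph G rooted at r with NCA function nca(·,·), let u, v be two vertices with w = nca(u, v), and let C be the fundamental cycle of the non-tree edge {u, v}, i.e., C consists of the T-paths from u to w and from v to w plus the edge {u,v}. Then a vertex x ∈ V belongs to C if and only if (nca(x, u) = x and nca(x, v) = w) or (nca(x, u) = w and nca(x, v) = x). -/
/-- `a` is an ancestor of `b` (possibly `a = b`) in the rooted tree with parent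
pointers `p`. -/
def IsAncestor {V : Type*} (p : V → V) (a b : V) : Prop := ∃ n : ℕ, p^[n] b = a

lemma IsAncestor.refl {V : Type*} (p : V → V) (a : V) : IsAncestor p a a := ⟨0, rfl⟩

lemma IsAncestor.trans {V : Type*} {p : V → V} {a b c : V}
    (h1 : IsAncestor p a b) (h2 : IsAncestor p b c) : IsAncestor p a c := by
  obtain ⟨n, hn⟩ := h1; obtain ⟨m, hm⟩ := h2
  exact ⟨n + m, by rw [Function.iterate_add_apply, hm, hn]⟩

lemma anc_antisymm {V : Type*} {p : V → V} {r : V} (hr : p r = r)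
    (hreach : ∀ x, ∃ n : ℕ, p^[n] x = r) {a b : V}
    (h1 : IsAncestor p a b) (h2 : IsAncestor p b a) : a = b := by
  obtain ⟨n, hn⟩ := h1; obtain ⟨m, hm⟩ := h2
  rcases Nat.eq_zero_or_pos n with hn0 | hpos
  · subst hn0; simpa using hn.symm
  · -- a lies on a cycle: p^[n+m] a = a
    have hc : p^[n + m] a = a := by
      rw [Function.iterate_add_apply, hm, hn]
    obtain ⟨k, hk⟩ := hreach a
    have hck : p^[(n + m) * k] a = a := by
      rw [Function.iterate_mul]
      exact Function.iterate_fixed hc k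
    have hkle : k ≤ (n + m) * k :=
      Nat.le_mul_of_pos_left k (by omega)
    have har : a = r := by
      have : p^[(n + m) * k] a = p^[(n + m) * k - k] (p^[k] a) := by
        rw [← Function.iterate_add_apply]
        congr 1
        omega
      rw [hck, hk, Function.iterate_fixed hr] at this
      exact this
    have hbr : b = r := by
      rw [← hm, har, Function.iterate_fixed hr]
    rw [har, hbr]

lemma nca_eq_left {V : Type*} {p : V → V} {r : V} (hr : p r = r)
    (hreach : ∀ x, ∃ n : ℕ, p^[n] x = r) {nca : V → V → V}
    (hanc1 : ∀ a b, IsAncestor p (nca a b) a)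
    (hdeep : ∀ a b c, IsAncestor p c a → IsAncestor p c b → IsAncestor p c (nca a b))
    {x y : V} (h : IsAncestor p x y) : nca x y = x :=
  anc_antisymm hr hreach (hanc1 x y) (hdeep x y x (IsAncestor.refl p x) h)

/-- NCA characterization of membership in a fundamental cycle.  The rooted spanning
tree is given by parent pointers `p` with root `r`, `nca` is a nearest-common-ancestor
function for it, `{u, v}` is a non-tree edge and `w = nca u v`.  A vertex `x` belongs
to the fundamental cycle `C` (the union of the tree paths from `u` to `w` and from
`v` to `w`) iff `(nca x u = x ∧ nca x v = w) ∨ (nca x u = w ∧ nca x v = x)`. -/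
theorem fundamental_cycle_mem_iff_nca {V : Type*} [Fintype V]
    (p : V → V) (r : V) (hr : p r = r) (hreach : ∀ x, ∃ n : ℕ, p^[n] x = r)
    (nca : V → V → V)
    (hanc1 : ∀ a b, IsAncestor p (nca a b) a)
    (hanc2 : ∀ a b, IsAncestor p (nca a b) b)
    (hdeep : ∀ a b c, IsAncestor p c a → IsAncestor p c b → IsAncestor p c (nca a b))
    (u v w : V) (hw : w = nca u v) :
    ∀ x : V,
      ((IsAncestor p x u ∧ IsAncestor p w x) ∨ (IsAncestor p x v ∧ IsAncestor p w x))
      ↔ ((nca x u = x ∧ nca x v = w) ∨ (nca x u = w ∧ nca x v = x)) := by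
  intro x
  have antisymm := fun {a b : V} => anc_antisymm (p := p) hr hreach (a := a) (b := b)
  constructor
  · rintro (⟨hxu, hwx⟩ | ⟨hxv, hwx⟩)
    · left
      refine ⟨nca_eq_left hr hreach hanc1 hdeep hxu, antisymm ?_ ?_⟩
      · -- nca x v ≤ w : nca x v is common ancestor of u and v
        rw [hw]
        exact hdeep u v _ ((hanc1 x v).trans hxu) (hanc2 x v)
      · -- w ≤ nca x v : w is common ancestor of x and v
        exact hdeep x v w hwx (hw ▸ hanc2 u v)
    · right
      refine ⟨antisymm ?_ ?_, nca_eq_left hr hreach hanc1 hdeep hxv⟩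
      · rw [hw]
        exact hdeep u v _ (hanc2 x u) ((hanc1 x u).trans hxv)
      · exact hdeep x u w hwx (hw ▸ hanc1 u v)
  · rintro (⟨h1, h2⟩ | ⟨h1, h2⟩)
    · exact Or.inl ⟨h1 ▸ hanc2 x u, h2 ▸ hanc1 x v⟩
    · exact Or.inr ⟨h2 ▸ hanc2 x v, h1 ▸ hanc1 x u⟩
end
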